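/- Let j ≥ 0 be an integer. Let v₀ ∈ P_j, and for each m ∈ {1,2,3,4} let v_{b,m} be a real polynomial of degree ≤ j+1 in the coordinate running along the edge F_m. Then the following are equivalent: (i) for every q ∈ BDM_{j+1}(K) one has −∫_K v₀ (div q) dx dy + Σ_{m=1}^{4} ∫_{F_m} v_{b,m} (q·n_m) ds = 0; (ii) there exists a constant c ∈ ℝ such that v₀ ≡ c on K and v_{b,m} ≡ c on F_m for every m. -/

import Mathlib

/-!
If `v₀` and the edge traces all equal `c`, the functional is `c` times
`-∫_K div q + ∫_{∂K} q·n`, which vanishes by the divergence theorem.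

Conversely, test first with `q = (βₓ ∂ₓv₀, β_y ∂_yv₀)`, where `βₓ = (x - x₀)(x₁ - x)` and
`β_y = (y - y₀)(y₁ - y)`: `q ∈ (P_{j+1})²`, its normal trace vanishes on `∂K`, and integration by
parts turns the functional into `∫_K βₓ (∂ₓv₀)² + β_y (∂_yv₀)²`, so `∇v₀ = 0` and `v₀ ≡ c`. What
remains are the edge terms weighted by `w_m = v_{b,m} - c`, of degree `≤ j+1`. Fields of
`(P_{j+1})²` depending on one coordinate only show that opposite edges carry the same weight and
that each weight is orthogonal to `P_j` on its edge; the two curl fields of `BDM_{j+1}` supply the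
missing moment against `t^(j+1)`, so every `w_m` is orthogonal to `P_{j+1}`, hence zero.
-/

open MeasureTheory MvPolynomial

noncomputable section

/-- Real polynomials in two variables. -/
abbrev Poly2 := MvPolynomial (Fin 2) ℝ

/-- Evaluate a two-variable polynomial at `(x, y)`. -/
def evalP (p : Poly2) (x y : ℝ) : ℝ := MvPolynomial.eval ![x, y] p

/-- `P_r`: total degree `≤ r`. -/
def memP (r : ℕ) (p : Poly2) : Prop := p.totalDegree ≤ r

/-- The divergence of a polynomial vector field. -/
def divP (q : Poly2 × Poly2) : Poly2 := pderiv 0 q.1 + pderiv 1 q.2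

/-- The curl of a scalar polynomial: `curl φ = (−∂φ/∂y, ∂φ/∂x)`. -/
def curlP (φ : Poly2) : Poly2 × Poly2 := (-(pderiv 1 φ), pderiv 0 φ)

/-- The Brezzi–Douglas–Marini space
`BDM_{j+1}(K) = (P_{j+1})² + span{curl (x^{j+2} y), curl (x y^{j+2})}`. -/
def memBDM (j : ℕ) (q : Poly2 × Poly2) : Prop :=
  ∃ (p₁ p₂ : Poly2) (a b : ℝ), memP (j+1) p₁ ∧ memP (j+1) p₂ ∧
    q.1 = p₁ + a • (curlP (X 0 ^ (j+2) * X 1)).1 + b • (curlP (X 0 * X 1 ^ (j+2))).1 ∧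
    q.2 = p₂ + a • (curlP (X 0 ^ (j+2) * X 1)).2 + b • (curlP (X 0 * X 1 ^ (j+2))).2

open Set

theorem MvPolynomial.totalDegree_pderiv_le {σ R : Type*} [CommSemiring R] (i : σ)
    (p : MvPolynomial σ R) : (pderiv i p).totalDegree ≤ p.totalDegree - 1 := by
  classical
  refine Finset.sup_le fun m hm => ?_
  rw [mem_support_iff, coeff_pderiv] at hm
  have := le_totalDegree (mem_support_iff.2 (left_ne_zero_of_mul hm))
  rw [Finsupp.sum_add_index' (fun _ => rfl) (fun _ _ _ => rfl), Finsupp.sum_single_index rfl]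
    at this
  omega

theorem MvPolynomial.totalDegree_X_sub_C_le {σ R : Type*} [CommRing R] [Nontrivial R]
    (i : σ) (a : R) : (X i - C a : MvPolynomial σ R).totalDegree ≤ 1 :=
  (totalDegree_sub_C_le _ _).trans (totalDegree_X i).le

theorem MvPolynomial.hasFDerivAt_eval {σ : Type*} [Fintype σ] (p : MvPolynomial σ ℝ)
    (x : σ → ℝ) :
    HasFDerivAt (fun x => eval x p)
      (∑ i, eval x (pderiv i p) • ContinuousLinearMap.proj (R := ℝ) (φ := fun _ : σ => ℝ) i) x := by
  classical
  induction p using MvPolynomial.induction_on with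
  | C a => simpa using hasFDerivAt_const a x
  | add p q hp hq =>
    simpa [Finset.sum_add_distrib, add_smul] using hp.fun_add hq
  | mul_X p i hp =>
    simp only [eval_mul, eval_X]
    refine (hp.fun_mul (hasFDerivAt_apply i x)).congr_fderiv ?_
    ext v
    simp [pderiv_X, Pi.single_apply, Finset.sum_add_distrib, add_mul, apply_ite, ite_mul,
      Finset.mul_sum, mul_assoc]

theorem eqOn_zero_of_setIntegral_eq_zero {X : Type*} [TopologicalSpace X] [MeasurableSpace X]
    [OpensMeasurableSpace X] {μ : Measure X} [μ.IsOpenPosMeasure] {f : X → ℝ} {s U : Set X}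
    (hU : IsOpen U) (hUs : U ⊆ s) (hf : ContinuousOn f U) (hint : IntegrableOn f s μ)
    (hnn : ∀ x ∈ s, 0 ≤ f x) (hs : MeasurableSet s) (h : ∫ x in s, f x ∂μ = 0) : EqOn f 0 U := by
  have hae := (setIntegral_eq_zero_iff_of_nonneg_ae ((ae_restrict_iff' hs).2 (ae_of_all _ hnn))
    hint).1 h
  exact μ.eqOn_open_of_ae_eq (ae_restrict_of_ae_restrict_of_subset hUs hae) hU hf continuousOn_const

theorem Polynomial.eq_zero_of_intervalIntegral_mul_pow_eq_zero {a b : ℝ} (hab : a < b)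
    {u : Polynomial ℝ} {n : ℕ} (hu : u.natDegree ≤ n)
    (h : ∀ k ≤ n, ∫ t in a..b, u.eval t * t ^ k = 0) : u = 0 := by
  have hsq : ∫ t in a..b, u.eval t ^ 2 = 0 := by
    have hexp (t : ℝ) :
        u.eval t ^ 2 = ∑ k ∈ Finset.range (n + 1), u.coeff k * (u.eval t * t ^ k) := by
      rw [sq]
      nth_rw 1 [u.eval_eq_sum_range' (Nat.lt_succ_of_le hu)]
      rw [Finset.sum_mul]
      exact Finset.sum_congr rfl fun k _ => by ring
    simp_rw [hexp]
    rw [intervalIntegral.integral_finsetSum fun k _ =>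
      (by fun_prop : Continuous _).intervalIntegrable _ _]
    exact Finset.sum_eq_zero fun k hk => by
      rw [intervalIntegral.integral_const_mul, h k (Nat.lt_succ_iff.1 (Finset.mem_range.1 hk)),
        mul_zero]
  rw [intervalIntegral.integral_of_le hab.le] at hsq
  have hroots := eqOn_zero_of_setIntegral_eq_zero isOpen_Ioo Ioo_subset_Ioc_self (by fun_prop)
    (by fun_prop : Continuous _).integrableOn_Ioc (fun t _ => sq_nonneg (u.eval t))
    measurableSet_Ioc hsq
  exact u.eq_zero_of_infinite_isRoot ((Ioo_infinite hab).mono fun t ht =>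
    (pow_eq_zero_iff two_ne_zero).1 (hroots ht))

@[simp] theorem evalP_C (a x y : ℝ) : evalP (C a) x y = a := eval_C _
@[simp] theorem evalP_X_zero (x y : ℝ) : evalP (X 0) x y = x := by simp [evalP]
@[simp] theorem evalP_X_one (x y : ℝ) : evalP (X 1) x y = y := by simp [evalP]
@[simp] theorem evalP_add (p q : Poly2) (x y : ℝ) :
    evalP (p + q) x y = evalP p x y + evalP q x y := map_add _ _ _
@[simp] theorem evalP_sub (p q : Poly2) (x y : ℝ) :
    evalP (p - q) x y = evalP p x y - evalP q x y := map_sub _ _ _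
@[simp] theorem evalP_neg (p : Poly2) (x y : ℝ) : evalP (-p) x y = -evalP p x y := map_neg _ _
@[simp] theorem evalP_mul (p q : Poly2) (x y : ℝ) :
    evalP (p * q) x y = evalP p x y * evalP q x y := map_mul _ _ _
@[simp] theorem evalP_pow (p : Poly2) (n : ℕ) (x y : ℝ) :
    evalP (p ^ n) x y = evalP p x y ^ n := map_pow _ _ _
@[simp] theorem evalP_natCast (n : ℕ) (x y : ℝ) : evalP n x y = n := map_natCast _ _
@[simp] theorem evalP_ofNat (n : ℕ) [n.AtLeastTwo] (x y : ℝ) :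
    evalP (no_index (OfNat.ofNat n)) x y = OfNat.ofNat n := map_ofNat _ _
@[simp] theorem evalP_zero (x y : ℝ) : evalP 0 x y = 0 := map_zero _

theorem hasFDerivAt_evalP (p : Poly2) (z : ℝ × ℝ) :
    HasFDerivAt (fun z : ℝ × ℝ => evalP p z.1 z.2)
      (evalP (pderiv 0 p) z.1 z.2 • ContinuousLinearMap.fst ℝ ℝ ℝ
        + evalP (pderiv 1 p) z.1 z.2 • ContinuousLinearMap.snd ℝ ℝ ℝ) z := by
  have hL := (ContinuousLinearEquiv.finTwoArrow ℝ ℝ).symm.hasFDerivAt (x := z)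
  rw [ContinuousLinearEquiv.finTwoArrow_symm_apply] at hL
  refine ((p.hasFDerivAt_eval _).comp z hL).congr_fderiv ?_
  ext <;> simp [evalP]

theorem continuous_evalP (p : Poly2) : Continuous fun z : ℝ × ℝ => evalP p z.1 z.2 :=
  (MvPolynomial.continuous_eval p).comp (by fun_prop)

theorem setIntegral_divP {x₀ x₁ y₀ y₁ : ℝ} (hx : x₀ ≤ x₁) (hy : y₀ ≤ y₁) (q : Poly2 × Poly2) :
    ∫ z in Icc x₀ x₁ ×ˢ Icc y₀ y₁, evalP (divP q) z.1 z.2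
      = (((∫ x in x₀..x₁, evalP q.2 x y₁) - ∫ x in x₀..x₁, evalP q.2 x y₀)
          + ∫ y in y₀..y₁, evalP q.1 x₁ y) - ∫ y in y₀..y₁, evalP q.1 x₀ y := by
  rw [Icc_prod_Icc]
  have := integral_divergence_prod_Icc_of_hasFDerivAt_of_le
    (fun z => evalP q.1 z.1 z.2) (fun z => evalP q.2 z.1 z.2) _ _ (x₀, y₀) (x₁, y₁) ⟨hx, hy⟩
    (continuous_evalP q.1).continuousOn (continuous_evalP q.2).continuousOn
    (fun z _ => hasFDerivAt_evalP q.1 z) (fun z _ => hasFDerivAt_evalP q.2 z)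
    ((continuous_evalP (divP q)).continuousOn.integrableOn_compact isCompact_Icc |>.congr_fun
      (fun z _ => by simp [divP, evalP]) measurableSet_Icc)
  simpa [divP, evalP] using this

theorem setIntegral_mul_divP {x₀ x₁ y₀ y₁ : ℝ} (hx : x₀ ≤ x₁) (hy : y₀ ≤ y₁) (v : Poly2)
    (q : Poly2 × Poly2) (h₀ : ∀ y, evalP q.1 x₀ y = 0) (h₁ : ∀ y, evalP q.1 x₁ y = 0)
    (h₂ : ∀ x, evalP q.2 x y₀ = 0) (h₃ : ∀ x, evalP q.2 x y₁ = 0) :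
    ∫ z in Icc x₀ x₁ ×ˢ Icc y₀ y₁, evalP v z.1 z.2 * evalP (divP q) z.1 z.2
      = -∫ z in Icc x₀ x₁ ×ˢ Icc y₀ y₁, evalP (pderiv 0 v * q.1 + pderiv 1 v * q.2) z.1 z.2 := by
  have hLeibniz : divP (v * q.1, v * q.2) = v * divP q + (pderiv 0 v * q.1 + pderiv 1 v * q.2) := by
    simp only [divP, pderiv_mul]
    ring
  have hflux := setIntegral_divP hx hy (v * q.1, v * q.2)
  simp only [hLeibniz, evalP_mul, h₀, h₁, h₂, h₃, mul_zero, intervalIntegral.integral_zero,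
    sub_zero, add_zero, evalP_add (v * divP q)] at hflux
  have hint : ∀ f : ℝ × ℝ → ℝ, Continuous f → IntegrableOn f (Icc x₀ x₁ ×ˢ Icc y₀ y₁) :=
    fun f hf => hf.continuousOn.integrableOn_compact (isCompact_Icc.prod isCompact_Icc)
  rw [integral_add (hint _ ((continuous_evalP v).fun_mul (continuous_evalP _)))
    (hint _ (continuous_evalP _))] at hflux
  linarith

theorem memP_zero (r : ℕ) : memP r 0 := by simp [memP]

theorem memP_X_pow (i : Fin 2) {k r : ℕ} (hk : k ≤ r) : memP r (X i ^ k) := by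
  simpa [memP, totalDegree_X_pow] using hk

theorem memP_X_sub_C_mul_X_pow (i i' : Fin 2) (a : ℝ) {k r : ℕ} (hk : k + 1 ≤ r) :
    memP r ((X i - C a) * X i' ^ k) := by
  have := totalDegree_X_sub_C_le i a
  refine (totalDegree_mul _ _).trans ?_
  rw [totalDegree_X_pow]
  omega

theorem memBDM_of_memP {j : ℕ} {p₁ p₂ : Poly2} (hp₁ : memP (j + 1) p₁) (hp₂ : memP (j + 1) p₂) :
    memBDM j (p₁, p₂) :=
  ⟨p₁, p₂, 0, 0, hp₁, hp₂, by simp, by simp⟩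

/-- The flux of a field component `f` through the edges `{a₀} × [b₀,b₁]` and `{a₁} × [b₀,b₁]`
(outward normals `∓e₁`), weighted by edge traces `u₀` and `u₁`. Horizontal edges are the case
`f = swap (evalP q.2)`. -/
def edgeFlux (a₀ a₁ b₀ b₁ : ℝ) (u₀ u₁ : Polynomial ℝ) (f : ℝ → ℝ → ℝ) : ℝ :=
  (∫ t in b₀..b₁, u₀.eval t * -f a₀ t) + ∫ t in b₀..b₁, u₁.eval t * f a₁ t

def boundaryPairing (x₀ x₁ y₀ y₁ : ℝ) (w₁ w₂ w₃ w₄ : Polynomial ℝ) (q : Poly2 × Poly2) : ℝ :=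
  edgeFlux x₀ x₁ y₀ y₁ w₁ w₂ (evalP q.1) + edgeFlux y₀ y₁ x₀ x₁ w₃ w₄ (Function.swap (evalP q.2))

def weakGradPairing (x₀ x₁ y₀ y₁ : ℝ) (v₀ : Poly2) (vb₁ vb₂ vb₃ vb₄ : Polynomial ℝ)
    (q : Poly2 × Poly2) : ℝ :=
  -(∫ z in Icc x₀ x₁ ×ˢ Icc y₀ y₁, evalP v₀ z.1 z.2 * evalP (divP q) z.1 z.2)
    + ((∫ y in y₀..y₁, vb₁.eval y * (-(evalP q.1 x₀ y)))
      + (∫ y in y₀..y₁, vb₂.eval y * evalP q.1 x₁ y)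
      + (∫ x in x₀..x₁, vb₃.eval x * (-(evalP q.2 x y₀)))
      + (∫ x in x₀..x₁, vb₄.eval x * evalP q.2 x y₁))

theorem weakGradPairing_eq (x₀ x₁ y₀ y₁ : ℝ) (v₀ : Poly2) (vb₁ vb₂ vb₃ vb₄ : Polynomial ℝ)
    (q : Poly2 × Poly2) :
    weakGradPairing x₀ x₁ y₀ y₁ v₀ vb₁ vb₂ vb₃ vb₄ q
      = -(∫ z in Icc x₀ x₁ ×ˢ Icc y₀ y₁, evalP v₀ z.1 z.2 * evalP (divP q) z.1 z.2)
        + boundaryPairing x₀ x₁ y₀ y₁ vb₁ vb₂ vb₃ vb₄ q := by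
  simp only [weakGradPairing, boundaryPairing, edgeFlux, Function.swap, add_assoc]

section edgeFlux

variable {a₀ a₁ b₀ b₁ : ℝ} {u₀ u₁ : Polynomial ℝ} {f : ℝ → ℝ → ℝ}

theorem edgeFlux_of_eq_mul_pow (g : ℝ → ℝ) (k : ℕ) (hf : ∀ s t, f s t = g s * t ^ k) :
    edgeFlux a₀ a₁ b₀ b₁ u₀ u₁ f
      = g a₁ * (∫ t in b₀..b₁, u₁.eval t * t ^ k) - g a₀ * ∫ t in b₀..b₁, u₀.eval t * t ^ k := by
  simp only [edgeFlux, hf, mul_neg, intervalIntegral.integral_neg, mul_left_comm _ (g _),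
    intervalIntegral.integral_const_mul]
  ring

theorem edgeFlux_eq_zero_of_trace (h₀ : ∀ t, f a₀ t = 0) (h₁ : ∀ t, f a₁ t = 0) :
    edgeFlux a₀ a₁ b₀ b₁ u₀ u₁ f = 0 := by
  simp [edgeFlux, h₀, h₁]

theorem edgeFlux_eq_zero_of_eqOn (hb : b₀ ≤ b₁) (h₀ : ∀ t ∈ Icc b₀ b₁, u₀.eval t = 0)
    (h₁ : ∀ t ∈ Icc b₀ b₁, u₁.eval t = 0) : edgeFlux a₀ a₁ b₀ b₁ u₀ u₁ f = 0 := by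
  have hvanish (u : Polynomial ℝ) (g : ℝ → ℝ) (hu : ∀ t ∈ Icc b₀ b₁, u.eval t = 0) :
      ∫ t in b₀..b₁, u.eval t * g t = 0 := by
    rw [intervalIntegral.integral_congr (g := 0) fun t ht => by
      simp [hu t (uIcc_of_le hb ▸ ht)]]
    simp
  rw [edgeFlux, hvanish u₀ _ h₀, hvanish u₁ _ h₁, add_zero]

theorem edgeFlux_sub_C (c : ℝ) (hf₀ : Continuous (f a₀)) (hf₁ : Continuous (f a₁)) :
    edgeFlux a₀ a₁ b₀ b₁ (u₀ - Polynomial.C c) (u₁ - Polynomial.C c) f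
      = edgeFlux a₀ a₁ b₀ b₁ u₀ u₁ f
        - c * ((∫ t in b₀..b₁, f a₁ t) - ∫ t in b₀..b₁, f a₀ t) := by
  simp only [edgeFlux, Polynomial.eval_sub, Polynomial.eval_C, sub_mul]
  rw [intervalIntegral.integral_sub ((by fun_prop : Continuous _).intervalIntegrable _ _)
      ((by fun_prop : Continuous _).intervalIntegrable _ _),
    intervalIntegral.integral_sub ((by fun_prop : Continuous _).intervalIntegrable _ _)
      ((by fun_prop : Continuous _).intervalIntegrable _ _),
    intervalIntegral.integral_const_mul, intervalIntegral.integral_const_mul,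
    intervalIntegral.integral_neg]
  ring

theorem eq_and_orthogonal_of_edgeFlux_eq_zero (ha : a₀ < a₁) (hb : b₀ < b₁) {n : ℕ}
    (hu₀ : u₀.natDegree ≤ n + 1) (hu₁ : u₁.natDegree ≤ n + 1)
    (h₀ : ∀ k ≤ n, edgeFlux a₀ a₁ b₀ b₁ u₀ u₁ (fun s t => (s - a₁) * t ^ k) = 0)
    (h₁ : ∀ k ≤ n + 1, edgeFlux a₀ a₁ b₀ b₁ u₀ u₁ (fun _ t => t ^ k) = 0) :
    u₁ = u₀ ∧ ∀ k ≤ n, ∫ t in b₀..b₁, u₀.eval t * t ^ k = 0 := by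
  refine ⟨sub_eq_zero.1 <| Polynomial.eq_zero_of_intervalIntegral_mul_pow_eq_zero hb
    ((Polynomial.natDegree_sub_le _ _).trans (max_le hu₁ hu₀)) fun k hk => ?_, fun k hk => ?_⟩
  · have := h₁ k hk
    rw [edgeFlux_of_eq_mul_pow (fun _ => 1) k fun _ _ => (one_mul _).symm] at this
    simp only [Polynomial.eval_sub, sub_mul]
    rw [intervalIntegral.integral_sub ((by fun_prop : Continuous _).intervalIntegrable _ _)
      ((by fun_prop : Continuous _).intervalIntegrable _ _)]
    linarith
  · have := h₀ k hk
    rw [edgeFlux_of_eq_mul_pow (· - a₁) k fun _ _ => rfl, sub_self, zero_mul, zero_sub,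
      neg_eq_zero] at this
    exact (mul_eq_zero.1 this).resolve_left (sub_ne_zero.2 ha.ne)

end edgeFlux

theorem boundaryPairing_eq_zero_of_eqOn {x₀ x₁ y₀ y₁ : ℝ} (hx : x₀ ≤ x₁) (hy : y₀ ≤ y₁)
    {w₁ w₂ w₃ w₄ : Polynomial ℝ} (hw₁ : ∀ t ∈ Icc y₀ y₁, w₁.eval t = 0)
    (hw₂ : ∀ t ∈ Icc y₀ y₁, w₂.eval t = 0) (hw₃ : ∀ t ∈ Icc x₀ x₁, w₃.eval t = 0)
    (hw₄ : ∀ t ∈ Icc x₀ x₁, w₄.eval t = 0) (q : Poly2 × Poly2) :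
    boundaryPairing x₀ x₁ y₀ y₁ w₁ w₂ w₃ w₄ q = 0 := by
  rw [boundaryPairing, edgeFlux_eq_zero_of_eqOn hy hw₁ hw₂, edgeFlux_eq_zero_of_eqOn hx hw₃ hw₄,
    add_zero]

theorem eq_and_orthogonal_of_boundaryPairing_eq_zero {x₀ x₁ y₀ y₁ : ℝ} (hx : x₀ < x₁)
    (hy : y₀ < y₁) {j : ℕ} {w₁ w₂ w₃ w₄ : Polynomial ℝ} (hw₁ : w₁.natDegree ≤ j + 1)
    (hw₂ : w₂.natDegree ≤ j + 1) (hw₃ : w₃.natDegree ≤ j + 1) (hw₄ : w₄.natDegree ≤ j + 1)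
    (h : ∀ q, memBDM j q → boundaryPairing x₀ x₁ y₀ y₁ w₁ w₂ w₃ w₄ q = 0) :
    (w₂ = w₁ ∧ ∀ k ≤ j, ∫ t in y₀..y₁, w₁.eval t * t ^ k = 0)
      ∧ (w₄ = w₃ ∧ ∀ k ≤ j, ∫ t in x₀..x₁, w₃.eval t * t ^ k = 0) := by
  have hV (p : Poly2) (hp : memP (j + 1) p) (f : ℝ → ℝ → ℝ) (hf : evalP p = f) :
      edgeFlux x₀ x₁ y₀ y₁ w₁ w₂ f = 0 := by
    simpa [boundaryPairing, ← hf, edgeFlux_eq_zero_of_trace (f := Function.swap (evalP 0))]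
      using h _ (memBDM_of_memP hp (memP_zero _))
  have hH (p : Poly2) (hp : memP (j + 1) p) (f : ℝ → ℝ → ℝ) (hf : Function.swap (evalP p) = f) :
      edgeFlux y₀ y₁ x₀ x₁ w₃ w₄ f = 0 := by
    simpa [boundaryPairing, ← hf, edgeFlux_eq_zero_of_trace (f := evalP 0)]
      using h _ (memBDM_of_memP (memP_zero _) hp)
  exact ⟨eq_and_orthogonal_of_edgeFlux_eq_zero hx hy hw₁ hw₂
      (fun k hk => hV _ (memP_X_sub_C_mul_X_pow 0 1 x₁ (k := k) (by omega)) _ (by ext; simp))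
      (fun k hk => hV _ (memP_X_pow 1 hk) _ (by ext; simp)),
    eq_and_orthogonal_of_edgeFlux_eq_zero hy hx hw₃ hw₄
      (fun k hk => hH _ (memP_X_sub_C_mul_X_pow 1 0 y₁ (k := k) (by omega)) _
        (by ext; simp [Function.swap]))
      (fun k hk => hH _ (memP_X_pow 0 hk) _ (by ext; simp [Function.swap]))⟩

theorem eq_zero_of_boundaryPairing_eq_zero {x₀ x₁ y₀ y₁ : ℝ} (hx : x₀ < x₁) (hy : y₀ < y₁)
    {j : ℕ} {w₁ w₂ w₃ w₄ : Polynomial ℝ} (hw₁ : w₁.natDegree ≤ j + 1)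
    (hw₂ : w₂.natDegree ≤ j + 1) (hw₃ : w₃.natDegree ≤ j + 1) (hw₄ : w₄.natDegree ≤ j + 1)
    (h : ∀ q, memBDM j q → boundaryPairing x₀ x₁ y₀ y₁ w₁ w₂ w₃ w₄ q = 0) :
    w₁ = 0 ∧ w₂ = 0 ∧ w₃ = 0 ∧ w₄ = 0 := by
  obtain ⟨⟨h₂₁, horth₁⟩, h₄₃, horth₃⟩ :=
    eq_and_orthogonal_of_boundaryPairing_eq_zero hx hy hw₁ hw₂ hw₃ hw₄ h
  subst w₂ w₄
  have hcurl₁ := h (curlP (X 0 ^ (j + 2) * X 1))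
    ⟨0, 0, 1, 0, memP_zero _, memP_zero _, by simp, by simp⟩
  have hcurl₂ := h (curlP (X 0 * X 1 ^ (j + 2)))
    ⟨0, 0, 0, 1, memP_zero _, memP_zero _, by simp, by simp⟩
  rw [boundaryPairing,
    edgeFlux_of_eq_mul_pow (fun s => -s ^ (j + 2)) 0 fun s t => by simp [curlP],
    edgeFlux_of_eq_mul_pow (fun s => ((j : ℝ) + 2) * s) (j + 1) fun s t => by
      simp [curlP, Function.swap, mul_comm, mul_left_comm],
    horth₁ 0 (Nat.zero_le _)] at hcurl₁
  rw [boundaryPairing,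
    edgeFlux_of_eq_mul_pow (fun s => -(((j : ℝ) + 2) * s)) (j + 1) fun s t => by
      simp [curlP, mul_comm, mul_left_comm],
    edgeFlux_of_eq_mul_pow (fun s => s ^ (j + 2)) 0 fun s t => by simp [curlP, Function.swap],
    horth₃ 0 (Nat.zero_le _)] at hcurl₂
  have hj : ((j : ℝ) + 2) ≠ 0 := by positivity
  have hI₁ : ∫ t in y₀..y₁, w₁.eval t * t ^ (j + 1) = 0 := by
    have : ((j : ℝ) + 2) * (x₁ - x₀) * ∫ t in y₀..y₁, w₁.eval t * t ^ (j + 1) = 0 := by linarith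
    exact (mul_eq_zero.1 this).resolve_left (mul_ne_zero hj (sub_ne_zero.2 hx.ne'))
  have hI₃ : ∫ t in x₀..x₁, w₃.eval t * t ^ (j + 1) = 0 := by
    have : ((j : ℝ) + 2) * (y₁ - y₀) * ∫ t in x₀..x₁, w₃.eval t * t ^ (j + 1) = 0 := by linarith
    exact (mul_eq_zero.1 this).resolve_left (mul_ne_zero hj (sub_ne_zero.2 hy.ne'))
  have hw₁0 := Polynomial.eq_zero_of_intervalIntegral_mul_pow_eq_zero hy hw₁ fun k hk =>
    (Nat.le_succ_iff.1 hk).elim (horth₁ k) (· ▸ hI₁)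
  have hw₃0 := Polynomial.eq_zero_of_intervalIntegral_mul_pow_eq_zero hx hw₃ fun k hk =>
    (Nat.le_succ_iff.1 hk).elim (horth₃ k) (· ▸ hI₃)
  exact ⟨hw₁0, hw₁0, hw₃0, hw₃0⟩

theorem weakGradPairing_eq_boundaryPairing_of_const {x₀ x₁ y₀ y₁ : ℝ} (hx : x₀ ≤ x₁)
    (hy : y₀ ≤ y₁) {v₀ : Poly2} {c : ℝ}
    (hc : ∀ z ∈ Icc x₀ x₁ ×ˢ Icc y₀ y₁, evalP v₀ z.1 z.2 = c)
    (vb₁ vb₂ vb₃ vb₄ : Polynomial ℝ) (q : Poly2 × Poly2) :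
    weakGradPairing x₀ x₁ y₀ y₁ v₀ vb₁ vb₂ vb₃ vb₄ q
      = boundaryPairing x₀ x₁ y₀ y₁ (vb₁ - Polynomial.C c) (vb₂ - Polynomial.C c)
          (vb₃ - Polynomial.C c) (vb₄ - Polynomial.C c) q := by
  have hv₀ : ∫ z in Icc x₀ x₁ ×ˢ Icc y₀ y₁, evalP v₀ z.1 z.2 * evalP (divP q) z.1 z.2
      = c * ∫ z in Icc x₀ x₁ ×ˢ Icc y₀ y₁, evalP (divP q) z.1 z.2 := by
    rw [← integral_const_mul]
    exact setIntegral_congr_fun (measurableSet_Icc.prod measurableSet_Icc) fun z hz => by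
      simp only [hc z hz]
  have hcont (p : Poly2) (a : ℝ) : Continuous (evalP p a) := by
    simpa [Function.comp_def] using (continuous_evalP p).comp (Continuous.prodMk_right a)
  have hcont' (p : Poly2) (a : ℝ) : Continuous (Function.swap (evalP p) a) := by
    simpa [Function.comp_def, Function.swap] using
      (continuous_evalP p).comp (Continuous.prodMk_left a)
  rw [weakGradPairing_eq, boundaryPairing, boundaryPairing, hv₀, setIntegral_divP hx hy,
    edgeFlux_sub_C c (hcont _ _) (hcont _ _), edgeFlux_sub_C c (hcont' _ _) (hcont' _ _)]
  simp only [Function.swap]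
  ring

theorem exists_const_of_pderiv_eq_zero_on_Ioo {x₀ x₁ y₀ y₁ : ℝ} (hx : x₀ < x₁) (hy : y₀ < y₁)
    (p : Poly2) (h : ∀ z ∈ Ioo x₀ x₁ ×ˢ Ioo y₀ y₁,
      evalP (pderiv 0 p) z.1 z.2 = 0 ∧ evalP (pderiv 1 p) z.1 z.2 = 0) :
    ∃ c, ∀ z ∈ Icc x₀ x₁ ×ˢ Icc y₀ y₁, evalP p z.1 z.2 = c := by
  obtain ⟨z₀, hz₀⟩ := (nonempty_Ioo.2 hx).prod (nonempty_Ioo.2 hy)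
  have hconst : EqOn (fun z : ℝ × ℝ => evalP p z.1 z.2) (fun _ => evalP p z₀.1 z₀.2)
      (Ioo x₀ x₁ ×ˢ Ioo y₀ y₁) := fun z hz => by
    have := Convex.norm_image_sub_le_of_norm_hasFDerivWithin_le
      (fun z _ => (hasFDerivAt_evalP p z).hasFDerivWithinAt) (C := 0)
      (fun z hz => by simp [(h z hz).1, (h z hz).2])
      ((convex_Ioo x₀ x₁).prod (convex_Ioo y₀ y₁)) hz₀ hz
    simpa [sub_eq_zero] using this
  refine ⟨_, hconst.of_subset_closure (continuous_evalP p).continuousOn continuousOn_const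
    (prod_mono Ioo_subset_Icc_self Ioo_subset_Icc_self) ?_⟩
  rw [closure_prod_eq, closure_Ioo hx.ne, closure_Ioo hy.ne]

theorem pderiv_eq_zero_on_Ioo_of_setIntegral_eq_zero {x₀ x₁ y₀ y₁ : ℝ} (p : Poly2)
    (h : ∫ z in Icc x₀ x₁ ×ˢ Icc y₀ y₁, (z.1 - x₀) * (x₁ - z.1) * evalP (pderiv 0 p) z.1 z.2 ^ 2
      + (z.2 - y₀) * (y₁ - z.2) * evalP (pderiv 1 p) z.1 z.2 ^ 2 = 0) :
    ∀ z ∈ Ioo x₀ x₁ ×ˢ Ioo y₀ y₁,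
      evalP (pderiv 0 p) z.1 z.2 = 0 ∧ evalP (pderiv 1 p) z.1 z.2 = 0 := by
  have hcont : Continuous fun z : ℝ × ℝ => (z.1 - x₀) * (x₁ - z.1) * evalP (pderiv 0 p) z.1 z.2 ^ 2
      + (z.2 - y₀) * (y₁ - z.2) * evalP (pderiv 1 p) z.1 z.2 ^ 2 := by
    have := continuous_evalP (pderiv 0 p)
    have := continuous_evalP (pderiv 1 p)
    fun_prop
  have hzero := eqOn_zero_of_setIntegral_eq_zero (isOpen_Ioo.prod isOpen_Ioo)
    (prod_mono Ioo_subset_Icc_self Ioo_subset_Icc_self) hcont.continuousOn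
    (hcont.continuousOn.integrableOn_compact (isCompact_Icc.prod isCompact_Icc))
    (fun z ⟨⟨hx₀, hx₁⟩, hy₀, hy₁⟩ => add_nonneg
      (mul_nonneg (mul_nonneg (sub_nonneg.2 hx₀) (sub_nonneg.2 hx₁)) (sq_nonneg _))
      (mul_nonneg (mul_nonneg (sub_nonneg.2 hy₀) (sub_nonneg.2 hy₁)) (sq_nonneg _)))
    (measurableSet_Icc.prod measurableSet_Icc) h
  intro z hz
  have hbx := mul_pos (sub_pos.2 hz.1.1) (sub_pos.2 hz.1.2)
  have hby := mul_pos (sub_pos.2 hz.2.1) (sub_pos.2 hz.2.2)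
  have := add_eq_zero_iff_of_nonneg (mul_nonneg hbx.le (sq_nonneg _))
    (mul_nonneg hby.le (sq_nonneg _)) |>.1 (hzero hz)
  exact ⟨(pow_eq_zero_iff two_ne_zero).1 ((mul_eq_zero.1 this.1).resolve_left hbx.ne'),
    (pow_eq_zero_iff two_ne_zero).1 ((mul_eq_zero.1 this.2).resolve_left hby.ne')⟩

theorem exists_const_of_weakGradPairing_eq_zero {x₀ x₁ y₀ y₁ : ℝ} (hx : x₀ < x₁)
    (hy : y₀ < y₁) {j : ℕ} {v₀ : Poly2} (hv₀ : memP j v₀) {vb₁ vb₂ vb₃ vb₄ : Polynomial ℝ}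
    (h : ∀ q, memBDM j q → weakGradPairing x₀ x₁ y₀ y₁ v₀ vb₁ vb₂ vb₃ vb₄ q = 0) :
    ∃ c, ∀ z ∈ Icc x₀ x₁ ×ˢ Icc y₀ y₁, evalP v₀ z.1 z.2 = c := by
  by_cases hdeg : v₀.totalDegree = 0
  · rw [totalDegree_eq_zero_iff_eq_C.1 hdeg]
    exact ⟨_, fun z _ => evalP_C _ _ _⟩
  set βx : Poly2 := (X 0 - C x₀) * -(X 0 - C x₁)
  set βy : Poly2 := (X 1 - C y₀) * -(X 1 - C y₁)
  set q : Poly2 × Poly2 := (βx * pderiv 0 v₀, βy * pderiv 1 v₀)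
  have hβ (i : Fin 2) (a b : ℝ) : ((X i - C a) * -(X i - C b) : Poly2).totalDegree ≤ 2 := by
    rw [mul_neg, totalDegree_neg]
    exact (totalDegree_mul _ _).trans
      (add_le_add (totalDegree_X_sub_C_le i a) (totalDegree_X_sub_C_le i b))
  have hq : memBDM j q := by
    have hv : v₀.totalDegree ≤ j := hv₀
    have hβx : βx.totalDegree ≤ 2 := hβ 0 x₀ x₁
    have hβy : βy.totalDegree ≤ 2 := hβ 1 y₀ y₁
    refine memBDM_of_memP ?_ ?_ <;> refine (totalDegree_mul _ _).trans ?_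
    · have := totalDegree_pderiv_le 0 v₀; omega
    · have := totalDegree_pderiv_le 1 v₀; omega
  have hflux : (fun z : ℝ × ℝ => evalP (pderiv 0 v₀ * q.1 + pderiv 1 v₀ * q.2) z.1 z.2)
      = fun z => (z.1 - x₀) * (x₁ - z.1) * evalP (pderiv 0 v₀) z.1 z.2 ^ 2
        + (z.2 - y₀) * (y₁ - z.2) * evalP (pderiv 1 v₀) z.1 z.2 ^ 2 := by
    ext z
    simp only [q, βx, βy, evalP_add, evalP_mul, evalP_neg, evalP_sub, evalP_X_zero, evalP_X_one,
      evalP_C]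
    ring
  have := h q hq
  rw [weakGradPairing_eq, setIntegral_mul_divP hx.le hy.le v₀ q (by simp [q, βx])
    (by simp [q, βx]) (by simp [q, βy]) (by simp [q, βy]), boundaryPairing,
    edgeFlux_eq_zero_of_trace (by simp [q, βx]) (by simp [q, βx]),
    edgeFlux_eq_zero_of_trace (by simp [q, βy, Function.swap]) (by simp [q, βy, Function.swap]),
    neg_neg, add_zero, add_zero, hflux] at this
  exact exists_const_of_pderiv_eq_zero_on_Ioo hx hy v₀
    (pderiv_eq_zero_on_Ioo_of_setIntegral_eq_zero v₀ this)

/-- On the rectangle `K = [x₀,x₁] × [y₀,y₁]`, for `v₀ ∈ P_j` and edge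
polynomials `v_{b,m}` of degree `≤ j+1`, the weak gradient functional
`q ↦ -∫_K v₀ div q + ∑_m ∫_{F_m} v_{b,m} (q·n_m)` vanishes on all of `BDM_{j+1}(K)` iff
`v₀` and all the `v_{b,m}` are the same constant on `K` and its edges. -/
theorem statement1 (j : ℕ) (x₀ x₁ y₀ y₁ : ℝ) (hx : x₀ < x₁) (hy : y₀ < y₁)
    (v₀ : Poly2) (hv₀ : memP j v₀)
    (vb₁ vb₂ vb₃ vb₄ : Polynomial ℝ)
    (h₁ : vb₁.natDegree ≤ j + 1) (h₂ : vb₂.natDegree ≤ j + 1)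
    (h₃ : vb₃.natDegree ≤ j + 1) (h₄ : vb₄.natDegree ≤ j + 1) :
    (∀ q : Poly2 × Poly2, memBDM j q →
      (-(∫ z in Set.Icc x₀ x₁ ×ˢ Set.Icc y₀ y₁, evalP v₀ z.1 z.2 * evalP (divP q) z.1 z.2)
        + ((∫ y in y₀..y₁, vb₁.eval y * (-(evalP q.1 x₀ y)))
          + (∫ y in y₀..y₁, vb₂.eval y * evalP q.1 x₁ y)
          + (∫ x in x₀..x₁, vb₃.eval x * (-(evalP q.2 x y₀)))
          + (∫ x in x₀..x₁, vb₄.eval x * evalP q.2 x y₁)) = 0))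
    ↔ (∃ c : ℝ, (∀ x y, (x, y) ∈ Set.Icc x₀ x₁ ×ˢ Set.Icc y₀ y₁ → evalP v₀ x y = c)
        ∧ (∀ y ∈ Set.Icc y₀ y₁, vb₁.eval y = c)
        ∧ (∀ y ∈ Set.Icc y₀ y₁, vb₂.eval y = c)
        ∧ (∀ x ∈ Set.Icc x₀ x₁, vb₃.eval x = c)
        ∧ (∀ x ∈ Set.Icc x₀ x₁, vb₄.eval x = c)) := by
  show (∀ q, memBDM j q → weakGradPairing x₀ x₁ y₀ y₁ v₀ vb₁ vb₂ vb₃ vb₄ q = 0) ↔ _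
  constructor
  · intro h
    obtain ⟨c, hc⟩ := exists_const_of_weakGradPairing_eq_zero hx hy hv₀ h
    simp only [weakGradPairing_eq_boundaryPairing_of_const hx.le hy.le hc] at h
    obtain ⟨hw₁, hw₂, hw₃, hw₄⟩ := eq_zero_of_boundaryPairing_eq_zero hx hy (by simpa using h₁)
      (by simpa using h₂) (by simpa using h₃) (by simpa using h₄) h
    have hconst {u : Polynomial ℝ} (hu : u - Polynomial.C c = 0) (t : ℝ) : u.eval t = c := by
      simp [sub_eq_zero.1 hu]
    exact ⟨c, fun x y hxy => hc (x, y) hxy, fun t _ => hconst hw₁ t, fun t _ => hconst hw₂ t,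
      fun t _ => hconst hw₃ t, fun t _ => hconst hw₄ t⟩
  · rintro ⟨c, hv, hc₁, hc₂, hc₃, hc₄⟩ q -
    rw [weakGradPairing_eq_boundaryPairing_of_const hx.le hy.le (fun z hz => hv z.1 z.2 hz)]
    exact boundaryPairing_eq_zero_of_eqOn hx.le hy.le (fun t ht => by simp [hc₁ t ht])
      (fun t ht => by simp [hc₂ t ht]) (fun t ht => by simp [hc₃ t ht])
      (fun t ht => by simp [hc₄ t ht]) q
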